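/- For every natural number n ≥ 1, the double integral ∬_{[0,1]²} (1−x)(xy)^{n−1}/(−ln(xy)) dx dy equals 1/n − ln((n+1)/n). -/

import Mathlib

/-!
Write `F(x) = ∫₀ˣ tᵐ / (-log t) dt`. The substitution `t = xy` turns the inner integral into
`(1 - x) / x · F(x)`, and `(1 - x) / x` is the derivative of `log x + 1 - x`. Integrating by parts
against `G = (log x + 1 - x) F`, which is squeezed between `-x(1 - x)` and `0` and so vanishes at
both ends of `(0, 1)`, and using `(log x + 1 - x) xᵐ / (-log x) = (1 - x) xᵐ / (-log x) - xᵐ`, gives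
`∫₀¹ (1 - x) / x · F = 1 / (m + 1) - ∫₀¹ (1 - x) xᵐ / (-log x) dx`.
The last integrand is `∫ₘ^{m+1} xˢ ds`; swapping the integrals turns it into
`∫ₘ^{m+1} ds / (s + 1) = log ((m + 2) / (m + 1))`.
-/

open MeasureTheory Set Filter intervalIntegral Real
open scoped Topology

theorem integrableOn_of_continuousOn_of_norm_le {α E : Type*} [TopologicalSpace α]
    [MeasurableSpace α] [OpensMeasurableSpace α] [NormedAddCommGroup E]
    [SecondCountableTopologyEither α E] {μ : Measure α} {s : Set α} {f : α → E} {M : ℝ}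
    (hs : MeasurableSet s) (hμs : μ s < ⊤) (hf : ContinuousOn f s) (hM : ∀ x ∈ s, ‖f x‖ ≤ M) :
    IntegrableOn f s μ :=
  .of_bound hμs (hf.aestronglyMeasurable hs) M ((ae_restrict_iff' hs).2 (ae_of_all _ hM))

theorem intervalIntegrable_of_continuousOn_Ioo_of_abs_le {g : ℝ → ℝ} {a b M : ℝ} (hab : a ≤ b)
    (hg : ContinuousOn g (Ioo a b)) (hM : ∀ x ∈ Ioo a b, |g x| ≤ M) :
    IntervalIntegrable g volume a b :=
  (intervalIntegrable_iff_integrableOn_Ioo_of_le hab).2 <|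
    integrableOn_of_continuousOn_of_norm_le measurableSet_Ioo measure_Ioo_lt_top hg hM

theorem integral_const_rpow {x : ℝ} (hx0 : 0 < x) (hx1 : x ≠ 1) (a b : ℝ) :
    ∫ s in a..b, x ^ s = (x ^ b - x ^ a) / log x := by
  have hlog : log x ≠ 0 := log_ne_zero_of_pos_of_ne_one hx0 hx1
  have hderiv (s : ℝ) : HasDerivAt (fun s => x ^ s / log x) (x ^ s) s := by
    simpa [mul_div_assoc, div_self hlog] using
      (hasStrictDerivAt_const_rpow hx0 s).hasDerivAt.div_const (log x)
  rw [integral_eq_sub_of_hasDerivAt (fun s _ => hderiv s)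
    ((continuous_const_rpow hx0.ne').intervalIntegrable a b), sub_div]

noncomputable def powDivNegLog (m : ℕ) (t : ℝ) : ℝ := t ^ m / -log t

noncomputable def powDivNegLogIntegral (m : ℕ) (x : ℝ) : ℝ := ∫ t in (0 : ℝ)..x, powDivNegLog m t

section

variable {m : ℕ} {t x : ℝ}

theorem powDivNegLog_nonneg (ht0 : 0 ≤ t) (ht1 : t ≤ 1) : 0 ≤ powDivNegLog m t :=
  div_nonneg (pow_nonneg ht0 m) (neg_nonneg.2 (log_nonpos ht0 ht1))

theorem continuousOn_powDivNegLog : ContinuousOn (powDivNegLog m) (Ioo 0 1) := fun t ht =>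
  ((continuousAt_pow t m).div (continuousAt_log ht.1.ne').neg
    (neg_ne_zero.2 (log_neg ht.1 ht.2).ne)).continuousWithinAt

theorem powDivNegLog_le_of_le (ht : 0 ≤ t) (htx : t ≤ x) (hx : x < 1) :
    powDivNegLog m t ≤ (-log x)⁻¹ := by
  rcases ht.eq_or_lt with rfl | ht
  · simpa [powDivNegLog] using log_nonpos htx hx.le
  have hlog : 0 < -log x := neg_pos.2 (log_neg (ht.trans_le htx) hx)
  calc powDivNegLog m t ≤ 1 / -log x :=
        div_le_div₀ zero_le_one (pow_le_one₀ ht.le (htx.trans hx.le)) hlog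
          (neg_le_neg (log_le_log ht htx))
    _ = (-log x)⁻¹ := one_div _

theorem one_sub_mul_powDivNegLog_mem_Icc (hx0 : 0 < x) (hx1 : x < 1) :
    (1 - x) * powDivNegLog m x ∈ Icc 0 1 := by
  have hlog : 0 < -log x := neg_pos.2 (log_neg hx0 hx1)
  have hsub : 1 - x ≤ -log x := by linarith [log_le_sub_one_of_pos hx0]
  rw [powDivNegLog, ← mul_div_assoc, mem_Icc, div_le_one hlog]
  refine ⟨div_nonneg (mul_nonneg (by linarith) (by positivity)) hlog.le, ?_⟩
  calc (1 - x) * x ^ m ≤ (1 - x) * 1 :=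
        mul_le_mul_of_nonneg_left (pow_le_one₀ hx0.le hx1.le) (by linarith)
    _ ≤ -log x := by linarith

theorem intervalIntegrable_powDivNegLog (hx0 : 0 ≤ x) (hx1 : x < 1) :
    IntervalIntegrable (powDivNegLog m) volume 0 x :=
  intervalIntegrable_of_continuousOn_Ioo_of_abs_le hx0
    (continuousOn_powDivNegLog.mono (Ioo_subset_Ioo_right hx1.le)) fun _ ht =>
      (abs_of_nonneg (powDivNegLog_nonneg ht.1.le (ht.2.trans hx1).le)).trans_le
        (powDivNegLog_le_of_le ht.1.le ht.2.le hx1)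

theorem powDivNegLogIntegral_nonneg (hx0 : 0 ≤ x) (hx1 : x ≤ 1) :
    0 ≤ powDivNegLogIntegral m x :=
  integral_nonneg hx0 fun _ ht => powDivNegLog_nonneg ht.1 (ht.2.trans hx1)

theorem powDivNegLogIntegral_le (hx0 : 0 ≤ x) (hx1 : x < 1) :
    powDivNegLogIntegral m x ≤ x * (-log x)⁻¹ := by
  simpa [powDivNegLogIntegral] using integral_mono_on hx0 (intervalIntegrable_powDivNegLog hx0 hx1)
    intervalIntegrable_const fun _ ht => powDivNegLog_le_of_le (m := m) ht.1 ht.2 hx1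

theorem hasDerivAt_powDivNegLogIntegral (hx0 : 0 < x) (hx1 : x < 1) :
    HasDerivAt (powDivNegLogIntegral m) (powDivNegLog m x) x :=
  integral_hasDerivAt_right (intervalIntegrable_powDivNegLog hx0.le hx1)
    (continuousOn_powDivNegLog.stronglyMeasurableAtFilter isOpen_Ioo x ⟨hx0, hx1⟩)
    (continuousOn_powDivNegLog.continuousAt (Ioo_mem_nhds hx0 hx1))

theorem integral_one_sub_mul_pow_div_neg_log_mul (hx0 : 0 ≤ x) :
    ∫ y in (0 : ℝ)..1, (1 - x) * (x * y) ^ m / -log (x * y)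
      = (1 - x) / x * powDivNegLogIntegral m x := by
  rcases hx0.eq_or_lt with rfl | hx0
  · simp
  have hintegrand : (fun y => (1 - x) * (x * y) ^ m / -log (x * y))
      = fun y => (1 - x) * powDivNegLog m (x * y) := by
    simp only [powDivNegLog, mul_div_assoc]
  rw [hintegrand, intervalIntegral.integral_const_mul,
    integral_comp_mul_left (powDivNegLog m) hx0.ne', smul_eq_mul, mul_zero, mul_one,
    powDivNegLogIntegral]
  ring

theorem one_sub_div_mul_powDivNegLogIntegral_mem_Icc (hx0 : 0 < x) (hx1 : x < 1) :
    (1 - x) / x * powDivNegLogIntegral m x ∈ Icc 0 1 := by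
  have hlog : 0 < -log x := neg_pos.2 (log_neg hx0 hx1)
  have hsub : 1 - x ≤ -log x := by linarith [log_le_sub_one_of_pos hx0]
  refine ⟨mul_nonneg (div_nonneg (by linarith) hx0.le)
    (powDivNegLogIntegral_nonneg hx0.le hx1.le), ?_⟩
  calc (1 - x) / x * powDivNegLogIntegral m x ≤ (1 - x) / x * (x * (-log x)⁻¹) :=
        mul_le_mul_of_nonneg_left (powDivNegLogIntegral_le hx0.le hx1)
          (div_nonneg (by linarith) hx0.le)
    _ = (1 - x) / -log x := by field_simp
    _ ≤ 1 := (div_le_one hlog).2 hsub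

noncomputable def byPartsPrimitive (m : ℕ) (x : ℝ) : ℝ :=
  (log x + 1 - x) * powDivNegLogIntegral m x

theorem byPartsPrimitive_mem_Icc (hx0 : 0 < x) (hx1 : x < 1) :
    byPartsPrimitive m x ∈ Icc (-(x * (1 - x))) 0 := by
  set L := -log x
  set F := powDivNegLogIntegral m x
  have hL : 0 < L := neg_pos.2 (log_neg hx0 hx1)
  have hsub : 1 - x ≤ L := by linarith [log_le_sub_one_of_pos hx0]
  have hxL : x * L ≤ 1 - x := by
    have h := mul_le_mul_of_nonneg_left
      (log_inv x ▸ log_le_sub_one_of_pos (inv_pos.2 hx0)) hx0.le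
    rwa [mul_sub, mul_inv_cancel₀ hx0.ne', mul_one] at h
  have hF0 : 0 ≤ F := powDivNegLogIntegral_nonneg hx0.le hx1.le
  have hF : F * L ≤ x := (le_mul_inv_iff₀ hL).1 (powDivNegLogIntegral_le hx0.le hx1)
  have hG : byPartsPrimitive m x = -((L - (1 - x)) * F) := by
    simp only [byPartsPrimitive, L, F]; ring
  rw [hG, mem_Icc, neg_le_neg_iff, neg_nonpos]
  exact ⟨by nlinarith, mul_nonneg (by linarith) hF0⟩

theorem tendsto_byPartsPrimitive {l : Filter ℝ} {a : ℝ} (hl : l ≤ 𝓝 a) (ha : a * (1 - a) = 0)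
    (hmem : Ioo 0 1 ∈ l) : Tendsto (byPartsPrimitive m) l (𝓝 0) := by
  have hlow : Tendsto (fun x : ℝ => -(x * (1 - x))) l (𝓝 0) := by
    simpa [ha] using ((by fun_prop : Continuous fun x : ℝ => -(x * (1 - x))).tendsto a).mono_left hl
  refine tendsto_of_tendsto_of_tendsto_of_le_of_le' hlow tendsto_const_nhds ?_ ?_ <;>
    filter_upwards [hmem] with x hx
  exacts [(byPartsPrimitive_mem_Icc hx.1 hx.2).1, (byPartsPrimitive_mem_Icc hx.1 hx.2).2]

theorem hasDerivAt_byPartsPrimitive (hx0 : 0 < x) (hx1 : x < 1) :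
    HasDerivAt (byPartsPrimitive m)
      ((1 - x) / x * powDivNegLogIntegral m x + ((1 - x) * powDivNegLog m x - x ^ m)) x := by
  have hlog : log x ≠ 0 := (log_neg hx0 hx1).ne
  refine ((((hasDerivAt_log hx0.ne').add_const 1).sub (hasDerivAt_id' x)).mul
    (hasDerivAt_powDivNegLogIntegral (m := m) hx0 hx1)).congr_deriv ?_
  simp only [powDivNegLog, Pi.sub_apply]
  field_simp
  ring

end

theorem integral_one_sub_mul_powDivNegLog (m : ℕ) :
    ∫ x in (0 : ℝ)..1, (1 - x) * powDivNegLog m x = log ((m + 2) / (m + 1)) := by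
  have hm : (0 : ℝ) ≤ m := m.cast_nonneg
  have hint : IntegrableOn (Function.uncurry fun x s : ℝ => x ^ s)
      (uIoc 0 1 ×ˢ uIoc (m : ℝ) (m + 1)) := by
    rw [uIoc_of_le zero_le_one, uIoc_of_le (by linarith)]
    refine integrableOn_of_continuousOn_of_norm_le (M := 1)
      (measurableSet_Ioc.prod measurableSet_Ioc)
      ((Metric.isBounded_Ioc _ _).prod (Metric.isBounded_Ioc _ _)).measure_lt_top
      (fun p hp => (continuousAt_rpow p (Or.inl hp.1.1.ne')).continuousWithinAt) ?_
    rintro ⟨x, s⟩ ⟨hx, hs⟩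
    rw [Function.uncurry_apply_pair, norm_of_nonneg (rpow_nonneg hx.1.le s)]
    exact rpow_le_one hx.1.le hx.2 (by linarith [hs.1])
  calc ∫ x in (0 : ℝ)..1, (1 - x) * powDivNegLog m x
      = ∫ x in (0 : ℝ)..1, ∫ s in (m : ℝ)..m + 1, x ^ s :=
        integral_congr_Ioo_of_le zero_le_one fun x hx => by
          have hlog : log x ≠ 0 := (log_neg hx.1 hx.2).ne
          rw [integral_const_rpow hx.1 hx.2.ne, rpow_add hx.1, rpow_one, rpow_natCast,
            powDivNegLog]
          field_simp
          ring
    _ = ∫ s in (m : ℝ)..m + 1, ∫ x in (0 : ℝ)..1, x ^ s :=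
        intervalIntegral_intervalIntegral_swap hint
    _ = ∫ s in (m : ℝ)..m + 1, 1 / (s + 1) := integral_congr fun s hs => by
          have hs : 0 ≤ s :=
            hm.trans ((le_min le_rfl (le_add_of_nonneg_right zero_le_one)).trans hs.1)
          rw [integral_rpow (Or.inl (by linarith)), one_rpow,
            zero_rpow (by linarith), sub_zero]
    _ = log ((m + 2) / (m + 1)) := by
          rw [integral_comp_add_right (fun s => 1 / s), integral_one_div_of_pos (by linarith)
            (by linarith)]
          ring_nf

theorem integral_one_sub_div_mul_powDivNegLogIntegral (m : ℕ) :
    ∫ x in (0 : ℝ)..1, (1 - x) / x * powDivNegLogIntegral m x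
      = 1 / (m + 1) - log ((m + 2) / (m + 1)) := by
  have hA : IntervalIntegrable (fun x => (1 - x) / x * powDivNegLogIntegral m x) volume 0 1 :=
    intervalIntegrable_of_continuousOn_Ioo_of_abs_le (M := 1) zero_le_one
      (fun x hx => (((continuousAt_const.sub continuousAt_id).div continuousAt_id hx.1.ne').mul
        (hasDerivAt_powDivNegLogIntegral hx.1 hx.2).continuousAt).continuousWithinAt)
      fun x hx =>
        have hmem := one_sub_div_mul_powDivNegLogIntegral_mem_Icc (m := m) hx.1 hx.2
        (abs_of_nonneg hmem.1).trans_le hmem.2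
  have hJ : IntervalIntegrable (fun x => (1 - x) * powDivNegLog m x) volume 0 1 :=
    intervalIntegrable_of_continuousOn_Ioo_of_abs_le (M := 1) zero_le_one
      ((continuousOn_const.sub continuousOn_id).mul continuousOn_powDivNegLog)
      fun x hx =>
        have hmem := one_sub_mul_powDivNegLog_mem_Icc (m := m) hx.1 hx.2
        (abs_of_nonneg hmem.1).trans_le hmem.2
  have hftc := integral_eq_sub_of_hasDerivAt_of_tendsto zero_lt_one
    (fun x hx => hasDerivAt_byPartsPrimitive hx.1 hx.2)
    (hA.add (hJ.sub (intervalIntegrable_pow m)))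
    (tendsto_byPartsPrimitive nhdsWithin_le_nhds (by norm_num) (Ioo_mem_nhdsGT zero_lt_one))
    (tendsto_byPartsPrimitive nhdsWithin_le_nhds (by norm_num) (Ioo_mem_nhdsLT zero_lt_one))
  rw [integral_add hA (hJ.sub (intervalIntegrable_pow m)),
    integral_sub hJ (intervalIntegrable_pow m), integral_pow,
    integral_one_sub_mul_powDivNegLog, one_pow, zero_pow m.succ_ne_zero] at hftc
  linarith

theorem double_integral_term (n : ℕ) (hn : 1 ≤ n) :
    ∫ x in (0:ℝ)..1, ∫ y in (0:ℝ)..1,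
        (1 - x) * (x * y) ^ (n - 1) / (-Real.log (x * y))
      = 1 / (n : ℝ) - Real.log ((n + 1) / n) := by
  obtain ⟨m, rfl⟩ : ∃ m, n = m + 1 := ⟨n - 1, by omega⟩
  rw [Nat.add_sub_cancel, integral_congr fun x hx =>
      integral_one_sub_mul_pow_div_neg_log_mul ((le_min le_rfl zero_le_one).trans hx.1),
    integral_one_sub_div_mul_powDivNegLogIntegral]
  push_cast
  ring_nf
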